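/- arXiv:2510.19372 — 6 statements merged into one kernel-verified Lean document; each statement's English description precedes it below -/
import Mathlib

section
/- Let S, A be finite types, m a bijective ordering of S × A with m(i) = (s_i, a_i), and u : S × A → ℝ a function such that u(m(1)) ≥ u(m(2)) ≥ ... ≥ u(m(|S||A|)) (m sorts pairs in decreasing order of u). Then for every p : A → S and every index i, if p ∈ E_i^m (i.e., p(a_j) ≠ s_j for all j < i and p(a_i) = s_i), then max_{a ∈ A} u(p(a), a) = u(s_i, a_i). -/
theorem Equiv.le_symm_apply_of_forall_lt_ne {ι S A : Type*} [LinearOrder ι] (m : ι ≃ S × A)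
    {p : A → S} {i : ι} (hp : ∀ j < i, p (m j).2 ≠ (m j).1) (a : A) :
    i ≤ m.symm (p a, a) := by
  by_contra! h
  exact hp _ h (by simp)

theorem stmt_6_general {S A : Type*} [Fintype S] [Fintype A] [Nonempty A]
    (m : Fin (Fintype.card S * Fintype.card A) ≃ S × A)
    (u : S × A → ℝ)
    (hsort : ∀ i j, i ≤ j → u (m j) ≤ u (m i))
    (p : A → S) (i : Fin (Fintype.card S * Fintype.card A))
    (hp : (∀ j, j < i → p (m j).2 ≠ (m j).1) ∧ p (m i).2 = (m i).1) :
    Finset.univ.sup' Finset.univ_nonempty (fun a => u (p a, a)) = u (m i) := by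
  obtain ⟨hbefore, hat⟩ := hp
  apply le_antisymm
  · refine Finset.sup'_le _ _ fun a _ => ?_
    calc u (p a, a) = u (m (m.symm (p a, a))) := by rw [m.apply_symm_apply]
      _ ≤ u (m i) := hsort _ _ (m.le_symm_apply_of_forall_lt_ne hbefore a)
  · calc u (m i) = u (p (m i).2, (m i).2) := by rw [hat]
      _ ≤ _ := Finset.le_sup' (fun a => u (p a, a)) (Finset.mem_univ _)

/-- If `m` sorts the pairs `(s,a)` in decreasing order of `u`, and `p ∈ E_i^m`
(i.e. `p(a_j) ≠ s_j` for all `j < i` and `p(a_i) = s_i`), then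
`max_{a ∈ A} u(p(a), a) = u(s_i, a_i)`. -/
theorem stmt_6 {S A : Type*} [Fintype S] [Fintype A] [Nonempty S] [Nonempty A]
    (m : Fin (Fintype.card S * Fintype.card A) ≃ S × A)
    (u : S × A → ℝ)
    (hsort : ∀ i j, i ≤ j → u (m j) ≤ u (m i))
    (p : A → S) (i : Fin (Fintype.card S * Fintype.card A))
    (hp : (∀ j, j < i → p (m j).2 ≠ (m j).1) ∧ p (m i).2 = (m i).1) :
    Finset.univ.sup' Finset.univ_nonempty (fun a => u (p a, a)) = u (m i) :=
  stmt_6_general m u hsort p i hp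
end

section
/- With the notation of the sorting decomposition: for any probability mass function μ on functions p : A → S, any s ∈ S, and any u : S × A → ℝ, if m is an ordering sorting S × A in decreasing order of u, then E_{p∼μ}[max_{a ∈ A} u(p(a), a)] = ∑_i μ(E_i^m) · u(s_i, a_i), where every p lies in exactly one E_i^m. -/
/-!
Enumerate the pairs `(s, a)` by `m` in decreasing order of `u`. The cell `E i` collects the
functions `p` whose graph meets the enumeration for the first time at `m i`. This first match
exists because `(p a, a)` is enumerated for every `a`, so the cells partition `A → S`; and on
the cell `E i` every pair `(p a, a)` of the graph comes at or after `m i`, so the maximum of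
`u` over the graph is `u (m i)`. Summing `μ p * max` cell by cell gives the formula.
-/

section SortingCell

variable {ι S A : Type*} [LinearOrder ι]

def sortingCell (m : ι ≃ S × A) (i : ι) : Set (A → S) :=
  {p | (∀ j, j < i → p (m j).2 ≠ (m j).1) ∧ p (m i).2 = (m i).1}

lemma le_of_mem_sortingCell {m : ι ≃ S × A} {i : ι} {p : A → S} (hp : p ∈ sortingCell m i)
    {j : ι} (hj : p (m j).2 = (m j).1) : i ≤ j :=
  not_lt.mp fun hji => hp.1 j hji hj

lemma existsUnique_mem_sortingCell [WellFoundedLT ι] [Nonempty A] (m : ι ≃ S × A)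
    (p : A → S) : ∃! i, p ∈ sortingCell m i := by
  let hits : Set ι := {j | p (m j).2 = (m j).1}
  obtain ⟨a⟩ := ‹Nonempty A›
  have hne : hits.Nonempty := ⟨m.symm (p a, a), by simp [hits]⟩
  obtain ⟨i, hi, hmin⟩ := wellFounded_lt.has_min hits hne
  refine ⟨i, ⟨fun j hji hj => hmin j hj hji, hi⟩, fun j hj => ?_⟩
  exact le_antisymm (le_of_mem_sortingCell hj hi) (not_lt.mp (hmin j hj.2))

lemma sup'_eq_of_mem_sortingCell {α : Type*} [SemilatticeSup α] [Fintype A] [Nonempty A]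
    {m : ι ≃ S × A} {u : S × A → α} (hu : Antitone (u ∘ m)) {i : ι} {p : A → S}
    (hp : p ∈ sortingCell m i) :
    Finset.univ.sup' Finset.univ_nonempty (fun a => u (p a, a)) = u (m i) := by
  apply le_antisymm
  · refine Finset.sup'_le _ _ fun a _ => ?_
    have hmatch : p (m (m.symm (p a, a))).2 = (m (m.symm (p a, a))).1 := by simp
    simpa using hu (le_of_mem_sortingCell hp hmatch)
  · have hgraph : (p (m i).2, (m i).2) = m i := by rw [hp.2]
    exact hgraph ▸ Finset.le_sup' (fun a => u (p a, a)) (Finset.mem_univ (m i).2)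

end SortingCell

lemma Finset.sum_mul_eq_sum_indicator_mul_of_existsUnique {α ι : Type*} [Fintype α] [Fintype ι]
    {E : ι → Set α} (hE : ∀ p, ∃! i, p ∈ E i) {μ f : α → ℝ} {g : ι → ℝ}
    (hfg : ∀ i, ∀ p ∈ E i, f p = g i) :
    ∑ p, μ p * f p = ∑ i, (∑ p, (E i).indicator μ p) * g i := by
  classical
  calc ∑ p, μ p * f p = ∑ p, ∑ i, (E i).indicator μ p * g i := by
        refine Finset.sum_congr rfl fun p _ => ?_
        obtain ⟨i, hi, huniq⟩ := hE p
        rw [Finset.sum_eq_single i, Set.indicator_of_mem hi, hfg i p hi]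
        · exact fun j _ hji => by
            rw [Set.indicator_of_notMem fun hj => hji (huniq j hj), zero_mul]
        · simp
    _ = ∑ i, (∑ p, (E i).indicator μ p) * g i := by
        rw [Finset.sum_comm]
        simp only [Finset.sum_mul]

theorem stmt_7_general {S A : Type*} [Fintype S] [Fintype A] [Nonempty A] [DecidableEq A]
    (μ : (A → S) → ℝ)
    (m : Fin (Fintype.card S * Fintype.card A) ≃ S × A)
    (u : S × A → ℝ) (hsort : ∀ i j, i ≤ j → u (m j) ≤ u (m i))
    (E : Fin (Fintype.card S * Fintype.card A) → Set (A → S))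
    (hE : ∀ i, E i = {p | (∀ j, j < i → p (m j).2 ≠ (m j).1) ∧ p (m i).2 = (m i).1}) :
    (∀ p : A → S, ∃! i, p ∈ E i) ∧
      ∑ p : A → S, μ p * (Finset.univ.sup' Finset.univ_nonempty fun a => u (p a, a)) =
        ∑ i, (∑ p : A → S, (E i).indicator μ p) * u (m i) := by
  obtain rfl : E = sortingCell m := funext hE
  have hpartition := existsUnique_mem_sortingCell m
  refine ⟨hpartition, Finset.sum_mul_eq_sum_indicator_mul_of_existsUnique hpartition ?_⟩
  exact fun i p hp => sup'_eq_of_mem_sortingCell (fun _ _ h => hsort _ _ h) hp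

/-- Sorting decomposition of the expectation: for a pmf `μ` on `p : A → S` and `u` sorted in
decreasing order by `m`, every `p` lies in exactly one `E_i^m`, and
`E_{p∼μ}[max_a u(p(a), a)] = ∑_i μ(E_i^m)·u(s_i, a_i)`. -/
theorem stmt_7 {S A : Type*} [Fintype S] [Fintype A] [Nonempty S] [Nonempty A] [DecidableEq A]
    (μ : (A → S) → ℝ) (hμ0 : ∀ p, 0 ≤ μ p) (hμ1 : ∑ p : A → S, μ p = 1)
    (m : Fin (Fintype.card S * Fintype.card A) ≃ S × A)
    (u : S × A → ℝ) (hsort : ∀ i j, i ≤ j → u (m j) ≤ u (m i))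
    (E : Fin (Fintype.card S * Fintype.card A) → Set (A → S))
    (hE : ∀ i, E i = {p | (∀ j, j < i → p (m j).2 ≠ (m j).1) ∧ p (m i).2 = (m i).1}) :
    (∀ p : A → S, ∃! i, p ∈ E i) ∧
      ∑ p : A → S, μ p * (Finset.univ.sup' Finset.univ_nonempty fun a => u (p a, a)) =
        ∑ i, (∑ p : A → S, (E i).indicator μ p) * u (m i) :=
  stmt_7_general μ m u hsort E hE
end

section
/- Sorted constraint dominance: Let u : S × A → ℝ, let μ be a probability mass function on functions p : A → S, and let m* be an ordering of S × A sorting pairs in decreasing order of u. Then for any other ordering m of S × A, ∑_i μ(E_i^m) · u(m(i)) ≤ ∑_i μ(E_i^{m*}) · u(m*(i)) = E_{p∼μ}[max_{a} u(p(a), a)]. In particular, the tightest constraint among all orderings is attained by m*. -/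
/-!
Every `p` lies in exactly one set `E_i^m`: the one indexed by the first `i` with
`p (m i).2 = (m i).1`. Swapping the sums, the constraint of `m` is therefore
`∑_p μ p · u (first hit of p)`. The first hit is a pair of the form `(p a, a)`, so its value is
at most `max_a u (p a, a)`; and when `u ∘ m*` is antitone the first hit of `m*` precedes every
pair `(p a, a)`, so it attains that maximum.
-/

open Finset

/-- The sets `E_i^m` for an ordering `m` of the state-action pairs. -/
def Eset {S A : Type*} [Fintype S] [Fintype A]
    (m : Fin (Fintype.card S * Fintype.card A) ≃ S × A)
    (i : Fin (Fintype.card S * Fintype.card A)) : Set (A → S) :=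
  {p | (∀ j, j < i → p (m j).2 ≠ (m j).1) ∧ p (m i).2 = (m i).1}

namespace Eset

variable {S A : Type*} [Fintype S] [Fintype A]
  {m : Fin (Fintype.card S * Fintype.card A) ≃ S × A} {p : A → S}
  {i : Fin (Fintype.card S * Fintype.card A)}

open Classical in
noncomputable def hits (m : Fin (Fintype.card S * Fintype.card A) ≃ S × A) (p : A → S) :
    Finset (Fin (Fintype.card S * Fintype.card A)) :=
  univ.filter fun i => p (m i).2 = (m i).1

@[simp]
lemma mem_hits : i ∈ hits m p ↔ p (m i).2 = (m i).1 := by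
  simp [hits]

lemma hits_nonempty [Nonempty A] (m : Fin (Fintype.card S * Fintype.card A) ≃ S × A)
    (p : A → S) : (hits m p).Nonempty := by
  obtain ⟨a⟩ := ‹Nonempty A›
  exact ⟨m.symm (p a, a), by simp⟩

noncomputable def firstHit [Nonempty A] (m : Fin (Fintype.card S * Fintype.card A) ≃ S × A)
    (p : A → S) : Fin (Fintype.card S * Fintype.card A) :=
  (hits m p).min' (hits_nonempty m p)

variable [Nonempty A]

lemma apply_firstHit : m (firstHit m p) = (p (m (firstHit m p)).2, (m (firstHit m p)).2) :=
  Prod.ext (mem_hits.1 (min'_mem _ _)).symm rfl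

lemma firstHit_le (h : p (m i).2 = (m i).1) : firstHit m p ≤ i :=
  min'_le _ _ (mem_hits.2 h)

lemma mem_iff_eq_firstHit : p ∈ Eset m i ↔ i = firstHit m p := by
  constructor
  · rintro ⟨hmiss, hhit⟩
    refine (firstHit_le hhit).eq_or_lt.elim Eq.symm fun hlt => ?_
    exact absurd (congrArg Prod.fst apply_firstHit).symm (hmiss _ hlt)
  · rintro rfl
    exact ⟨fun j hj hjhit => (firstHit_le hjhit).not_gt hj,
      (congrArg Prod.fst apply_firstHit).symm⟩

lemma sum_indicator_mul_eq_firstHit (μ : (A → S) → ℝ) (u : S × A → ℝ)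
    (m : Fin (Fintype.card S * Fintype.card A) ≃ S × A) (p : A → S) :
    ∑ i, (Eset m i).indicator μ p * u (m i) = μ p * u (m (firstHit m p)) := by
  rw [sum_eq_single_of_mem (firstHit m p) (mem_univ _)]
  · rw [Set.indicator_of_mem (mem_iff_eq_firstHit.2 rfl)]
  · intro i _ hi
    rw [Set.indicator_of_notMem (fun h => hi (mem_iff_eq_firstHit.1 h)), zero_mul]

lemma sum_measure_mul_eq_sum_firstHit [DecidableEq A] (μ : (A → S) → ℝ) (u : S × A → ℝ)
    (m : Fin (Fintype.card S * Fintype.card A) ≃ S × A) :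
    ∑ i, (∑ p, (Eset m i).indicator μ p) * u (m i) = ∑ p, μ p * u (m (firstHit m p)) := by
  simp_rw [sum_mul]
  rw [sum_comm]
  exact sum_congr rfl fun p _ => sum_indicator_mul_eq_firstHit μ u m p

lemma apply_firstHit_le_sup' (u : S × A → ℝ) :
    u (m (firstHit m p)) ≤ univ.sup' univ_nonempty fun a => u (p a, a) := by
  rw [apply_firstHit]
  exact le_sup' (fun a => u (p a, a)) (mem_univ _)

lemma apply_firstHit_eq_sup'_of_antitone {u : S × A → ℝ} (hm : Antitone (u ∘ m)) :
    u (m (firstHit m p)) = univ.sup' univ_nonempty fun a => u (p a, a) := by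
  refine (apply_firstHit_le_sup' u).antisymm (sup'_le _ _ fun a _ => ?_)
  simpa using hm (firstHit_le (i := m.symm (p a, a)) (by simp))

end Eset

open Eset in
theorem stmt_8_general {S A : Type*} [Fintype S] [Fintype A] [Nonempty A] [DecidableEq A]
    (μ : (A → S) → ℝ) (hμ0 : ∀ p, 0 ≤ μ p)
    (u : S × A → ℝ)
    (mstar : Fin (Fintype.card S * Fintype.card A) ≃ S × A)
    (hsort : ∀ i j, i ≤ j → u (mstar j) ≤ u (mstar i))
    (m : Fin (Fintype.card S * Fintype.card A) ≃ S × A) :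
    (∑ i, (∑ p : A → S, (Eset m i).indicator μ p) * u (m i) ≤
        ∑ i, (∑ p : A → S, (Eset mstar i).indicator μ p) * u (mstar i)) ∧
      ∑ i, (∑ p : A → S, (Eset mstar i).indicator μ p) * u (mstar i) =
        ∑ p : A → S, μ p * (Finset.univ.sup' Finset.univ_nonempty fun a => u (p a, a)) := by
  have hmax (p : A → S) :
      u (mstar (firstHit mstar p)) = univ.sup' univ_nonempty fun a => u (p a, a) :=
    apply_firstHit_eq_sup'_of_antitone hsort
  rw [sum_measure_mul_eq_sum_firstHit, sum_measure_mul_eq_sum_firstHit]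
  refine ⟨sum_le_sum fun p _ => ?_, sum_congr rfl fun p _ => by rw [hmax]⟩
  rw [hmax]
  exact mul_le_mul_of_nonneg_left (apply_firstHit_le_sup' u) (hμ0 p)

/-- Sorted constraint dominance: for any ordering `m`,
`∑_i μ(E_i^m)·u(m(i)) ≤ ∑_i μ(E_i^{m*})·u(m*(i)) = E_{p∼μ}[max_a u(p(a),a)]`,
where `m*` sorts the pairs in decreasing order of `u`. -/
theorem stmt_8 {S A : Type*} [Fintype S] [Fintype A] [Nonempty S] [Nonempty A] [DecidableEq A]
    (μ : (A → S) → ℝ) (hμ0 : ∀ p, 0 ≤ μ p) (hμ1 : ∑ p : A → S, μ p = 1)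
    (u : S × A → ℝ)
    (mstar : Fin (Fintype.card S * Fintype.card A) ≃ S × A)
    (hsort : ∀ i j, i ≤ j → u (mstar j) ≤ u (mstar i))
    (m : Fin (Fintype.card S * Fintype.card A) ≃ S × A) :
    (∑ i, (∑ p : A → S, (Eset m i).indicator μ p) * u (m i) ≤
        ∑ i, (∑ p : A → S, (Eset mstar i).indicator μ p) * u (mstar i)) ∧
      ∑ i, (∑ p : A → S, (Eset mstar i).indicator μ p) * u (mstar i) =
        ∑ p : A → S, μ p * (Finset.univ.sup' Finset.univ_nonempty fun a => u (p a, a)) :=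
  stmt_8_general μ hμ0 u mstar hsort m
end

section
/- Monotonicity of look-ahead: the 1-look-ahead fixed point dominates the standard optimal value. If v* satisfies v*(s) = E_{p∼P̄(·|s)}[max_a { r(s,a) + γ v*(p(a)) }] and v satisfies the standard Bellman equation v(s) = max_a { r(s,a) + γ ∑_{s'} P(s'|s,a) v(s') }, then v*(s) ≥ v(s) for all s. -/
/-!
Since the maximum of expectations is at most the expectation of the maximum, and the marginal of
the product law `P̄(·|s)` at an action `a` is `P(·|s,a)`, the look-ahead value `vstar` is a
supersolution of the standard Bellman equation. At a state where `v - vstar` is largest, a greedy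
action for `v` bounds `v - vstar` by `γ` times an average of itself, which forces it to be `≤ 0`.
-/

open Finset

theorem sum_pi_prod_mul_apply {S A : Type*} [Fintype S] [Fintype A] [DecidableEq A]
    (P : A → S → ℝ) (hP1 : ∀ a, ∑ s, P a s = 1) (a : A) (g : S → ℝ) :
    ∑ p : A → S, (∏ a', P a' (p a')) * g (p a) = ∑ s, P a s * g s := by
  have hsplit : ∀ p : A → S, (∏ a', P a' (p a')) * g (p a) =
      ∏ a', P a' (p a') * (if a' = a then g (p a') else 1) := fun p => by
    rw [prod_mul_distrib, prod_ite_eq' univ a, if_pos (mem_univ a)]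
  simp_rw [hsplit]
  rw [← Fintype.prod_sum (κ := fun _ => S) fun a' s => P a' s * if a' = a then g s else 1]
  simp_rw [mul_ite, mul_one, sum_ite_irrel, hP1]
  rw [prod_ite_eq' univ a, if_pos (mem_univ a)]

theorem sum_mul_le_sum_prod_mul_sup' {S A : Type*} [Fintype S] [Fintype A] [Nonempty A]
    [DecidableEq A]
    (P : A → S → ℝ) (hP0 : ∀ a s, 0 ≤ P a s) (hP1 : ∀ a, ∑ s, P a s = 1)
    (f : A → S → ℝ) (a : A) :
    ∑ s, P a s * f a s ≤
      ∑ p : A → S, (∏ a', P a' (p a')) * univ.sup' univ_nonempty fun a' => f a' (p a') := by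
  rw [← sum_pi_prod_mul_apply P hP1 a]
  gcongr with p
  · exact prod_nonneg fun a' _ => hP0 a' (p a')
  · exact le_sup' (fun a' => f a' (p a')) (mem_univ a)

theorem nonpos_of_le_mul_sum_mul {S : Type*} [Fintype S] {γ : ℝ} (hγ0 : 0 ≤ γ) (hγ1 : γ < 1)
    (d : S → ℝ) (h : ∀ s, ∃ w : S → ℝ, (∀ s', 0 ≤ w s') ∧ ∑ s', w s' = 1 ∧
      d s ≤ γ * ∑ s', w s' * d s') (s : S) : d s ≤ 0 := by
  have : Nonempty S := ⟨s⟩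
  obtain ⟨s₀, hs₀⟩ := Finite.exists_max d
  obtain ⟨w, hw0, hw1, hd⟩ := h s₀
  have havg : ∑ s', w s' * d s' ≤ d s₀ := calc
    ∑ s', w s' * d s' ≤ ∑ s', w s' * d s₀ := by gcongr with s'; exacts [hw0 s', hs₀ s']
    _ = d s₀ := by rw [← sum_mul, hw1, one_mul]
  have : d s₀ ≤ γ * d s₀ := hd.trans (mul_le_mul_of_nonneg_left havg hγ0)
  nlinarith [hs₀ s]

theorem stmt_12_general {S A : Type*} [Fintype S] [Fintype A] [Nonempty A] [DecidableEq A]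
    (P : S → A → S → ℝ) (hP0 : ∀ s a s', 0 ≤ P s a s') (hP1 : ∀ s a, ∑ s', P s a s' = 1)
    (r : S → A → ℝ) (γ : ℝ) (hγ : γ ∈ Set.Ioo (0:ℝ) 1)
    (vstar v : S → ℝ)
    (hvstar : ∀ s, vstar s = ∑ p : A → S, (∏ a, P s a (p a)) *
      (Finset.univ.sup' Finset.univ_nonempty fun a => r s a + γ * vstar (p a)))
    (hv : ∀ s, v s = Finset.univ.sup' Finset.univ_nonempty
      fun a => r s a + γ * ∑ s', P s a s' * v s') :
    ∀ s, vstar s ≥ v s := by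
  have hsuper : ∀ s a, r s a + γ * ∑ s', P s a s' * vstar s' ≤ vstar s := fun s a => calc
    r s a + γ * ∑ s', P s a s' * vstar s' = ∑ s', P s a s' * (r s a + γ * vstar s') := by
      simp only [mul_add, sum_add_distrib, ← sum_mul, hP1, one_mul, mul_left_comm _ γ, ← mul_sum]
    _ ≤ vstar s := (hvstar s).symm ▸
      sum_mul_le_sum_prod_mul_sup' (P s) (hP0 s) (hP1 s) (fun a s' => r s a + γ * vstar s') a
  have hgreedy : ∀ s, ∃ w : S → ℝ, (∀ s', 0 ≤ w s') ∧ ∑ s', w s' = 1 ∧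
      v s - vstar s ≤ γ * ∑ s', w s' * (v s' - vstar s') := fun s => by
    obtain ⟨a, -, ha⟩ := exists_mem_eq_sup' univ_nonempty
      fun a => r s a + γ * ∑ s', P s a s' * v s'
    refine ⟨P s a, hP0 s a, hP1 s a, ?_⟩
    simp only [hv s, ha, mul_sub, sum_sub_distrib]
    linarith [hsuper s a]
  exact fun s => sub_nonpos.mp (nonpos_of_le_mul_sum_mul hγ.1.le hγ.2 _ hgreedy s)

/-- Monotonicity of look-ahead: if `vstar` satisfies the one-step look-ahead fixed-point
equation `vstar(s) = E_{p∼P̄(·|s)}[max_a { r(s,a) + γ vstar(p(a)) }]` and `v` satisfies the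
standard Bellman equation `v(s) = max_a { r(s,a) + γ ∑_{s'} P(s'|s,a) v(s') }`, then
`vstar(s) ≥ v(s)` for all `s`. -/
theorem stmt_12 {S A : Type*} [Fintype S] [Fintype A] [Nonempty S] [Nonempty A] [DecidableEq A]
    (P : S → A → S → ℝ) (hP0 : ∀ s a s', 0 ≤ P s a s') (hP1 : ∀ s a, ∑ s', P s a s' = 1)
    (r : S → A → ℝ) (γ : ℝ) (hγ : γ ∈ Set.Ioo (0:ℝ) 1)
    (vstar v : S → ℝ)
    (hvstar : ∀ s, vstar s = ∑ p : A → S, (∏ a, P s a (p a)) *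
      (Finset.univ.sup' Finset.univ_nonempty fun a => r s a + γ * vstar (p a)))
    (hv : ∀ s, v s = Finset.univ.sup' Finset.univ_nonempty
      fun a => r s a + γ * ∑ s', P s a s' * v s') :
    ∀ s, vstar s ≥ v s :=
  stmt_12_general P hP0 hP1 r γ hγ vstar v hvstar hv
end

section
/- Lifting feasibility to the augmented LP: Suppose v : S → ℝ satisfies v(s) ≥ E_{p∼P̄(·|s)}[max_a { r(s,a) + γ v(p(a)) }] for all s ∈ S. Define v̄(s,p) = max_a { r(s,a) + γ v(p(a)) }. Then v̄ satisfies the augmented constraints: v̄(s,p) ≥ max_a { r(s,a) + γ E_{p'∼P̄(·|p(a))}[v̄(p(a), p')] } for all (s,p) ∈ S × S^A. -/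
theorem Finset.sup'_add_mul_le_sup'_add_mul {ι : Type*} {s : Finset ι} (hs : s.Nonempty)
    (r : ι → ℝ) {γ : ℝ} (hγ : 0 ≤ γ) {x y : ι → ℝ} (hxy : ∀ i ∈ s, x i ≤ y i) :
    s.sup' hs (fun i => r i + γ * x i) ≤ s.sup' hs (fun i => r i + γ * y i) :=
  Finset.sup'_mono_fun fun i hi => add_le_add_right (mul_le_mul_of_nonneg_left (hxy i hi) hγ) _

theorem stmt_13_general {S A : Type*} [Fintype S] [Fintype A] [Nonempty A] [DecidableEq A]
    (P : S → A → S → ℝ)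
    (r : S → A → ℝ) (γ : ℝ) (hγ : γ ∈ Set.Ioo (0:ℝ) 1)
    (v : S → ℝ)
    (hv : ∀ s, v s ≥ ∑ p : A → S, (∏ a, P s a (p a)) *
      (Finset.univ.sup' Finset.univ_nonempty fun a => r s a + γ * v (p a)))
    (vbar : S → (A → S) → ℝ)
    (hvbar : ∀ s (p : A → S), vbar s p =
      Finset.univ.sup' Finset.univ_nonempty fun a => r s a + γ * v (p a)) :
    ∀ s (p : A → S), vbar s p ≥ Finset.univ.sup' Finset.univ_nonempty
      fun a => r s a + γ * ∑ p' : A → S, (∏ a', P (p a) a' (p' a')) * vbar (p a) p' := by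
  obtain rfl : vbar = fun s p => Finset.univ.sup' Finset.univ_nonempty
      fun a => r s a + γ * v (p a) := funext₂ hvbar
  intro s p
  -- Once `v̄` is unfolded, the expectation of `v̄ (p a) ·` is exactly the right side of `hv (p a)`.
  exact Finset.sup'_add_mul_le_sup'_add_mul _ _ hγ.1.le fun a _ => hv (p a)

/-- Lifting feasibility to the augmented LP: if `v` satisfies
`v(s) ≥ E_{p∼P̄(·|s)}[max_a { r(s,a) + γ v(p(a)) }]` for all `s`, then
`v̄(s,p) := max_a { r(s,a) + γ v(p(a)) }` satisfies the augmented constraints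
`v̄(s,p) ≥ max_a { r(s,a) + γ E_{p'∼P̄(·|p(a))}[v̄(p(a),p')] }`. -/
theorem stmt_13 {S A : Type*} [Fintype S] [Fintype A] [Nonempty S] [Nonempty A] [DecidableEq A]
    (P : S → A → S → ℝ) (hP0 : ∀ s a s', 0 ≤ P s a s') (hP1 : ∀ s a, ∑ s', P s a s' = 1)
    (r : S → A → ℝ) (γ : ℝ) (hγ : γ ∈ Set.Ioo (0:ℝ) 1)
    (v : S → ℝ)
    (hv : ∀ s, v s ≥ ∑ p : A → S, (∏ a, P s a (p a)) *
      (Finset.univ.sup' Finset.univ_nonempty fun a => r s a + γ * v (p a)))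
    (vbar : S → (A → S) → ℝ)
    (hvbar : ∀ s (p : A → S), vbar s p =
      Finset.univ.sup' Finset.univ_nonempty fun a => r s a + γ * v (p a)) :
    ∀ s (p : A → S), vbar s p ≥ Finset.univ.sup' Finset.univ_nonempty
      fun a => r s a + γ * ∑ p' : A → S, (∏ a', P (p a) a' (p' a')) * vbar (p a) p' :=
  stmt_13_general P r γ hγ v hv vbar hvbar
end

section
/- Lifting feasibility in the average-reward LP: Suppose (g, h) with g ∈ ℝ and h : S → ℝ satisfies g + h(s) ≥ E_{p∼P̄(·|s)}[max_a { r(s,a) + h(p(a)) }] for all s. Define h̄(s,p) = max_a { r(s,a) + h(p(a)) } − g. Then g + h̄(s,p) ≥ max_a { r(s,a) + E_{p'∼P̄(·|p(a))}[h̄(p(a), p')] } for all (s,p) ∈ S × S^A. -/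
/-! Under `P̄(·|t)` the average of `h̄(t, ·)` is `E[max_a {r(t,a) + h(p(a))}] - g ≤ h(t)`
by feasibility of `(g, h)`, and `r(s,a) + h(p(a)) ≤ max_a {r(s,a) + h(p(a))} = g + h̄(s,p)`. -/

open Finset

theorem Fintype.sum_prod_eq_one_of_sum_eq_one {A S : Type*} [Fintype A] [DecidableEq A]
    [Fintype S] {q : A → S → ℝ} (hq : ∀ a, ∑ s, q a s = 1) :
    ∑ p : A → S, ∏ a, q a (p a) = 1 := by
  rw [← Fintype.prod_sum]
  simp [hq]

theorem Fintype.sum_mul_sub_const_of_sum_eq_one {ι : Type*} [Fintype ι] {w : ι → ℝ}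
    (hw : ∑ i, w i = 1) (f : ι → ℝ) (c : ℝ) :
    ∑ i, w i * (f i - c) = ∑ i, w i * f i - c := by
  simp [mul_sub, sum_sub_distrib, ← sum_mul, hw]

theorem stmt_14_general {S A : Type*} [Fintype S] [Fintype A] [Nonempty A] [DecidableEq A]
    (P : S → A → S → ℝ) (hP1 : ∀ s a, ∑ s', P s a s' = 1)
    (r : S → A → ℝ) (g : ℝ) (h : S → ℝ)
    (hgh : ∀ s, g + h s ≥ ∑ p : A → S, (∏ a, P s a (p a)) *
      (Finset.univ.sup' Finset.univ_nonempty fun a => r s a + h (p a)))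
    (hbar : S → (A → S) → ℝ)
    (hhbar : ∀ s (p : A → S), hbar s p =
      (Finset.univ.sup' Finset.univ_nonempty fun a => r s a + h (p a)) - g) :
    ∀ s (p : A → S), g + hbar s p ≥ Finset.univ.sup' Finset.univ_nonempty
      fun a => r s a + ∑ p' : A → S, (∏ a', P (p a) a' (p' a')) * hbar (p a) p' := by
  intro s p
  have mean_hbar_le : ∀ t, ∑ p' : A → S, (∏ a', P t a' (p' a')) * hbar t p' ≤ h t := by
    intro t
    simp_rw [hhbar t]
    rw [Fintype.sum_mul_sub_const_of_sum_eq_one (Fintype.sum_prod_eq_one_of_sum_eq_one (hP1 t))]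
    linarith [hgh t]
  rw [hhbar s p, ge_iff_le, sup'_le_iff]
  intro a _
  linarith [mean_hbar_le (p a), le_sup' (fun a' => r s a' + h (p a')) (mem_univ a)]

/-- Lifting feasibility in the average-reward LP: if `(g, h)` satisfies
`g + h(s) ≥ E_{p∼P̄(·|s)}[max_a { r(s,a) + h(p(a)) }]` for all `s`, then
`h̄(s,p) := max_a { r(s,a) + h(p(a)) } − g` satisfies
`g + h̄(s,p) ≥ max_a { r(s,a) + E_{p'∼P̄(·|p(a))}[h̄(p(a),p')] }` for all `(s,p)`. -/
theorem stmt_14 {S A : Type*} [Fintype S] [Fintype A] [Nonempty S] [Nonempty A] [DecidableEq A]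
    (P : S → A → S → ℝ) (hP0 : ∀ s a s', 0 ≤ P s a s') (hP1 : ∀ s a, ∑ s', P s a s' = 1)
    (r : S → A → ℝ) (g : ℝ) (h : S → ℝ)
    (hgh : ∀ s, g + h s ≥ ∑ p : A → S, (∏ a, P s a (p a)) *
      (Finset.univ.sup' Finset.univ_nonempty fun a => r s a + h (p a)))
    (hbar : S → (A → S) → ℝ)
    (hhbar : ∀ s (p : A → S), hbar s p =
      (Finset.univ.sup' Finset.univ_nonempty fun a => r s a + h (p a)) - g) :
    ∀ s (p : A → S), g + hbar s p ≥ Finset.univ.sup' Finset.univ_nonempty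
      fun a => r s a + ∑ p' : A → S, (∏ a', P (p a) a' (p' a')) * hbar (p a) p' :=
  stmt_14_general P hP1 r g h hgh hbar hhbar
end
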